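/- (Generalized Cayley transform, necessity.) Let n ≥ m and let M be an n × m real matrix with MᵀM ≺ I, i.e., I − MᵀM positive definite. Then there exist matrices X, Y ∈ ℝ^{m×m}, Z ∈ ℝ^{(n−m)×m} and ε > 0 such that, with N = XᵀX + (Y − Yᵀ) + ZᵀZ + εI, the matrix I + N is invertible and M is the vertical stacking of Cayley(N) = (I − N)(I + N)^{-1} (first m rows) and −2Z(I + N)^{-1} (last n − m rows). -/

import Mathlib

/-! Write `M = [A; B]`. Then `1 - AᵀA = (1 - MᵀM) + BᵀB ≻ 0`, so `1 + A` is invertible, and since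
the Cayley transform is an involution, `N := Cayley(A)` has `Cayley(N) = A` and
`(1 + N)⁻¹ = (1 + A)/2`; with `Z = -B(1 + A)⁻¹` the lower block is recovered as well.
With `C = (1 + A)⁻¹`, the symmetric part of `N` is `Cᵀ(1 - AᵀA)C = Cᵀ(1 - MᵀM)C + ZᵀZ`, and the
positive definite congruence `Cᵀ(1 - MᵀM)C` is `XᵀX + εI` for some `ε > 0`; the skew part of
`N` is `Y - Yᵀ` with `Y = N/2`. -/

open Matrix

namespace Matrix

theorem transpose_mul_self_eq_add_toRows {m₁ m₂ n R : Type*} [Fintype m₁] [Fintype m₂]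
    [Semiring R] (M : Matrix (m₁ ⊕ m₂) n R) :
    Mᵀ * M = M.toRows₁ᵀ * M.toRows₁ + M.toRows₂ᵀ * M.toRows₂ := by
  conv_lhs => rw [← fromRows_toRows M]
  rw [transpose_fromRows, fromCols_mul_fromRows]

section Cayley

variable {n K : Type*} [Fintype n] [DecidableEq n] [Field K]

noncomputable def cayley (N : Matrix n n K) : Matrix n n K := (1 - N) * (1 + N)⁻¹

variable {A : Matrix n n K}

theorem one_add_cayley (hA : IsUnit (1 + A)) : 1 + cayley A = (2 : K) • (1 + A)⁻¹ := by
  have hC := mul_nonsing_inv _ ((isUnit_iff_isUnit_det _).1 hA)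
  calc 1 + cayley A = (1 + A) * (1 + A)⁻¹ + (1 - A) * (1 + A)⁻¹ := by rw [hC, cayley]
    _ = (2 : K) • (1 + A)⁻¹ := by
      rw [← add_mul, show 1 + A + (1 - A) = (2 : K) • 1 by module, smul_mul, Matrix.one_mul]

theorem one_sub_cayley (hA : IsUnit (1 + A)) : 1 - cayley A = (2 : K) • (A * (1 + A)⁻¹) := by
  have hC := mul_nonsing_inv _ ((isUnit_iff_isUnit_det _).1 hA)
  calc 1 - cayley A = (1 + A) * (1 + A)⁻¹ - (1 - A) * (1 + A)⁻¹ := by rw [hC, cayley]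
    _ = (2 : K) • (A * (1 + A)⁻¹) := by
      rw [← sub_mul, show 1 + A - (1 - A) = (2 : K) • A by module, smul_mul]

theorem cayley_add_transpose (hA : IsUnit (1 + A)) :
    cayley A + (cayley A)ᵀ = (2 : K) • ((1 + A)⁻¹ᵀ * (1 - Aᵀ * A) * (1 + A)⁻¹) := by
  set C := (1 + A)⁻¹
  have hC : (1 + A) * C = 1 := mul_nonsing_inv _ ((isUnit_iff_isUnit_det _).1 hA)
  have hCt : Cᵀ * (1 + Aᵀ) = 1 := by
    rw [← transpose_one, ← transpose_add, ← transpose_mul, hC]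
  calc cayley A + (cayley A)ᵀ
      = Cᵀ * (1 + Aᵀ) * ((1 - A) * C) + Cᵀ * (1 - Aᵀ) * ((1 + A) * C) := by
        rw [hCt, hC, cayley, transpose_mul, transpose_sub, transpose_one, Matrix.one_mul,
          Matrix.mul_one]
    _ = Cᵀ * ((1 + Aᵀ) * (1 - A) + (1 - Aᵀ) * (1 + A)) * C := by
        simp only [Matrix.mul_assoc, Matrix.mul_add, Matrix.add_mul]
    _ = (2 : K) • (Cᵀ * (1 - Aᵀ * A) * C) := by
        rw [show (1 + Aᵀ) * (1 - A) + (1 - Aᵀ) * (1 + A) = (2 : K) • (1 - Aᵀ * A) by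
          noncomm_ring; module, Matrix.mul_smul, Matrix.smul_mul]

variable [NeZero (2 : K)]

theorem one_add_cayley_mul_smul_one_add (hA : IsUnit (1 + A)) :
    (1 + cayley A) * ((2⁻¹ : K) • (1 + A)) = 1 := by
  rw [one_add_cayley hA, smul_mul_smul_comm, mul_inv_cancel₀ (NeZero.ne 2), one_smul,
    nonsing_inv_mul _ ((isUnit_iff_isUnit_det _).1 hA)]

theorem isUnit_one_add_cayley (hA : IsUnit (1 + A)) : IsUnit (1 + cayley A) :=
  (isUnit_iff_isUnit_det _).2 <|
    isUnit_det_of_right_inverse (one_add_cayley_mul_smul_one_add hA)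

theorem inv_one_add_cayley (hA : IsUnit (1 + A)) :
    (1 + cayley A)⁻¹ = (2⁻¹ : K) • (1 + A) :=
  inv_eq_right_inv (one_add_cayley_mul_smul_one_add hA)

theorem cayley_cayley (hA : IsUnit (1 + A)) : cayley (cayley A) = A := by
  rw [cayley, one_sub_cayley hA, inv_one_add_cayley hA, smul_mul_smul_comm,
    mul_inv_cancel₀ (NeZero.ne 2), one_smul, Matrix.mul_assoc,
    nonsing_inv_mul _ ((isUnit_iff_isUnit_det _).1 hA), Matrix.mul_one]

end Cayley

section PosDef

open scoped ComplexOrder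

variable {n 𝕜 : Type*} [Fintype n] [DecidableEq n] [RCLike 𝕜]

-- If `(1 + A) x = 0` then `‖A x‖ = ‖x‖`, which `1 - Aᴴ A ≻ 0` forbids for `x ≠ 0`.
theorem isUnit_one_add_of_posDef_one_sub_conjTranspose_mul_self {A : Matrix n n 𝕜}
    (hA : (1 - Aᴴ * A).PosDef) : IsUnit (1 + A) := by
  rw [isUnit_iff_isUnit_det, isUnit_iff_ne_zero]
  intro hdet
  obtain ⟨x, hx, hAx⟩ := exists_mulVec_eq_zero_iff.2 hdet
  have hAx' : A *ᵥ x = -x := by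
    rwa [add_mulVec, one_mulVec, add_eq_zero_iff_eq_neg'] at hAx
  have hpos := hA.dotProduct_mulVec_pos hx
  rw [sub_mulVec, one_mulVec, dotProduct_sub, ← mulVec_mulVec, dotProduct_mulVec,
    ← star_mulVec, hAx', star_neg, neg_dotProduct, dotProduct_neg, neg_neg, sub_self] at hpos
  exact hpos.false

open scoped MatrixOrder in
theorem PosDef.exists_eq_conjTranspose_mul_self_add_smul_one {A : Matrix n n 𝕜}
    (hA : A.PosDef) : ∃ ε : ℝ, 0 < ε ∧ ∃ X : Matrix n n 𝕜, A = Xᴴ * X + ε • 1 := by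
  cases subsingleton_or_nontrivial (Matrix n n 𝕜)
  · exact ⟨1, one_pos, 0, Subsingleton.elim _ _⟩
  obtain ⟨ε, hε, hεA⟩ : ∃ ε > 0, algebraMap ℝ (Matrix n n 𝕜) ε ≤ A :=
    (CFC.exists_pos_algebraMap_le_iff hA.isHermitian.isSelfAdjoint).2
      fun x hx ↦ hA.isStrictlyPositive.spectrum_pos hx
  obtain ⟨X, hX⟩ := CStarAlgebra.nonneg_iff_eq_star_mul_self.mp (sub_nonneg.2 hεA)
  refine ⟨ε, hε, X, ?_⟩
  rw [← star_eq_conjTranspose, ← hX, Algebra.algebraMap_eq_smul_one, sub_add_cancel]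

end PosDef

end Matrix

/-- generalized Cayley transform, necessity: if an `n × m` real
matrix `M` (rows indexed by `Fin m ⊕ Fin p`, so `n = m + p ≥ m`) satisfies
`MᵀM ≺ I`, then there exist `X, Y ∈ ℝ^{m×m}`, `Z ∈ ℝ^{p×m}` and `ε > 0` such
that, with `N = XᵀX + (Y − Yᵀ) + ZᵀZ + εI`, the matrix `I + N` is invertible
and `M` is the vertical stacking of `Cayley(N) = (I − N)(I + N)⁻¹` and
`−2Z(I + N)⁻¹`. -/
theorem generalized_cayley_necessity {m p : ℕ}
    (M : Matrix (Fin m ⊕ Fin p) (Fin m) ℝ)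
    (hM : (1 - Mᵀ * M).PosDef) :
    ∃ (X Y : Matrix (Fin m) (Fin m) ℝ) (Z : Matrix (Fin p) (Fin m) ℝ) (ε : ℝ)
      (N : Matrix (Fin m) (Fin m) ℝ),
      0 < ε ∧
      N = Xᵀ * X + (Y - Yᵀ) + Zᵀ * Z + ε • (1 : Matrix (Fin m) (Fin m) ℝ) ∧
      IsUnit (1 + N) ∧
      M = Matrix.fromRows ((1 - N) * (1 + N)⁻¹) ((-2 : ℝ) • (Z * (1 + N)⁻¹)) := by
  set A := M.toRows₁
  set B := M.toRows₂
  have hAB : 1 - Aᵀ * A = (1 - Mᵀ * M) + Bᵀ * B := by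
    rw [transpose_mul_self_eq_add_toRows]; abel
  have hA : IsUnit (1 + A) := by
    refine isUnit_one_add_of_posDef_one_sub_conjTranspose_mul_self ?_
    simpa only [conjTranspose_eq_transpose_of_trivial, hAB]
      using hM.add_posSemidef (posSemidef_conjTranspose_mul_self B)
  set C := (1 + A)⁻¹
  set Z := -(B * C)
  have hR : (Cᵀ * (1 - Mᵀ * M) * C).PosDef := by
    simpa only [conjTranspose_eq_transpose_of_trivial] using
      hM.conjTranspose_mul_mul_same (mulVec_injective_iff_isUnit.2 (isUnit_nonsing_inv_iff.2 hA))
  obtain ⟨ε, hε, X, hX⟩ := hR.exists_eq_conjTranspose_mul_self_add_smul_one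
  rw [conjTranspose_eq_transpose_of_trivial] at hX
  have hZZ : Zᵀ * Z = Cᵀ * (Bᵀ * B) * C := by simp [Z, transpose_mul, Matrix.mul_assoc]
  have hsym : (2⁻¹ : ℝ) • (cayley A + (cayley A)ᵀ) = Xᵀ * X + Zᵀ * Z + ε • 1 := by
    rw [cayley_add_transpose hA, smul_smul, inv_mul_cancel₀ two_ne_zero, one_smul, hAB,
      Matrix.mul_add, Matrix.add_mul, hX, hZZ]
    abel
  refine ⟨X, (2⁻¹ : ℝ) • cayley A, Z, ε, cayley A, hε, ?_, isUnit_one_add_cayley hA, ?_⟩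
  · rw [transpose_smul]
    linear_combination (norm := module) hsym
  · have hZ : (-2 : ℝ) • (Z * ((2⁻¹ : ℝ) • (1 + A))) = B := by
      rw [Matrix.mul_smul, Matrix.neg_mul, Matrix.mul_assoc,
        nonsing_inv_mul _ ((isUnit_iff_isUnit_det _).1 hA), Matrix.mul_one]
      module
    rw [← cayley, cayley_cayley hA, inv_one_add_cayley hA, hZ, fromRows_toRows]
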